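/- arXiv:0803.2429 — 4 statements merged into one kernel-verified Lean document; each statement's English description precedes it below -/
import Mathlib

section
/- Let X and Y be quivers and let X × Y denote their product quiver. For all vertices a, b of X and c, d of Y, there is a bijection between the type of paths from (a,c) to (b,d) in X × Y and the type of pairs (p, q), where p is a path from a to b in X and q is a path from c to d in Y, such that p and q have the same length. -/
open Quiver

/-- The product quiver: an arrow `(a,c) ⟶ (b,d)` is a pair of an arrow `a ⟶ b`
and an arrow `c ⟶ d`. -/
instance prodQuiver (X Y : Type*) [Quiver X] [Quiver Y] : Quiver (X × Y) :=
  ⟨fun p q => (p.1 ⟶ q.1) × (p.2 ⟶ q.2)⟩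

section Aux

variable {X Y : Type*} [Quiver X] [Quiver Y]

def fstP {u : X × Y} : ∀ {v : X × Y}, Path u v → Path u.1 v.1
  | _, .nil => .nil
  | _, .cons p e => (fstP p).cons e.1

def sndP {u : X × Y} : ∀ {v : X × Y}, Path u v → Path u.2 v.2
  | _, .nil => .nil
  | _, .cons p e => (sndP p).cons e.2

lemma fstP_length {u : X × Y} : ∀ {v : X × Y} (p : Path u v), (fstP p).length = p.length
  | _, .nil => rfl
  | _, .cons p _ => by simp [fstP, fstP_length p]

lemma sndP_length {u : X × Y} : ∀ {v : X × Y} (p : Path u v), (sndP p).length = p.length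
  | _, .nil => rfl
  | _, .cons p _ => by simp [sndP, sndP_length p]

def zipP {a : X} {c : Y} :
    ∀ {b : X} {d : Y} (p : Path a b) (q : Path c d),
      p.length = q.length → Path ((a, c) : X × Y) (b, d)
  | _, _, .nil, .nil, _ => .nil
  | _, _, .cons p e, .cons q f, h =>
      (zipP p q (by simpa using h)).cons (e, f)
  | _, _, .nil, .cons _ _, h => absurd h (by simp)
  | _, _, .cons _ _, .nil, h => absurd h (by simp)

lemma zipP_fstP_sndP {a : X} {c : Y} :
    ∀ {v : X × Y} (p : Path ((a, c) : X × Y) v) (h : (fstP p).length = (sndP p).length),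
      zipP (fstP p) (sndP p) h = p
  | _, .nil, _ => rfl
  | _, .cons p e, h => by
      simp only [fstP, sndP, zipP]
      rw [zipP_fstP_sndP p]
      rfl

lemma fstP_zipP {a : X} {c : Y} :
    ∀ {b : X} {d : Y} (p : Path a b) (q : Path c d) (h : p.length = q.length),
      fstP (zipP p q h) = p
  | _, _, .nil, .nil, _ => rfl
  | _, _, .cons p e, .cons q f, h => by
      simp only [zipP, fstP]
      rw [fstP_zipP p q]
  | _, _, .nil, .cons _ _, h => absurd h (by simp)
  | _, _, .cons _ _, .nil, h => absurd h (by simp)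

lemma sndP_zipP {a : X} {c : Y} :
    ∀ {b : X} {d : Y} (p : Path a b) (q : Path c d) (h : p.length = q.length),
      sndP (zipP p q h) = q
  | _, _, .nil, .nil, _ => rfl
  | _, _, .cons p e, .cons q f, h => by
      simp only [zipP, sndP]
      rw [sndP_zipP p q]
  | _, _, .nil, .cons _ _, h => absurd h (by simp)
  | _, _, .cons _ _, .nil, h => absurd h (by simp)

end Aux

/-- For quivers `X`, `Y` and vertices `a b : X`, `c d : Y`, paths from `(a,c)`
to `(b,d)` in the product quiver are in bijection with pairs of paths, one from `a` to `b`
in `X` and one from `c` to `d` in `Y`, having the same length. -/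
theorem statement1 (X Y : Type*) [Quiver X] [Quiver Y] (a b : X) (c d : Y) :
    Nonempty (Path ((a, c) : X × Y) (b, d) ≃
      {pq : Path a b × Path c d // pq.1.length = pq.2.length}) := by
  exact ⟨{
    toFun := fun p => ⟨(fstP p, sndP p), by simp [fstP_length, sndP_length]⟩
    invFun := fun pq => zipP pq.1.1 pq.1.2 pq.2
    left_inv := fun p => zipP_fstP_sndP p _
    right_inv := fun ⟨⟨p, q⟩, h⟩ => Subtype.ext (Prod.ext (fstP_zipP p q h) (sndP_zipP p q h)) }⟩
end

section
/- Let T be a quiver with exactly one vertex t whose arrows form a type M, let R and S be quivers, and let F : R ⥤q T and G : S ⥤q T be prefunctors. Define the pullback quiver P with vertex type R₀ × S₀, where an arrow from (r,s) to (r',s') is a pair (e : r ⟶ r', f : s ⟶ s') such that F.map e = G.map f. Then for all vertices r, r' of R and s, s' of S there is a bijection between the type of paths from (r,s) to (r',s') in P and the type of pairs (p, q), where p is a path from r to r' in R and q is a path from s to s' in S, such that F.mapPath p = G.mapPath q (an equality of paths from t to t in T). -/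
open Quiver

universe u v

/-! Since the target has a single vertex, `F.mapPath p = G.mapPath q` says exactly that `p`
and `q` have the same length and that their arrows have equal images step by step, so `p` and
`q` zip into a path of the pullback; conversely a path of the pullback is recovered from its two
projections. -/

/-- The pullback quiver of two prefunctors `F : R ⥤q SingleObj M` and
`G : S ⥤q SingleObj M`: vertices are pairs, and an arrow `(r,s) ⟶ (r',s')` is a pair of
arrows `e : r ⟶ r'`, `f : s ⟶ s'` with `F.map e = G.map f`. -/
@[nolint unusedArguments]
def PullbackQuiver {M : Type v} (R S : Type u) [Quiver.{v+1} R] [Quiver.{v+1} S]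
    (_F : R ⥤q SingleObj M) (_G : S ⥤q SingleObj M) : Type u := R × S

instance {M : Type v} (R S : Type u) [Quiver.{v+1} R] [Quiver.{v+1} S]
    (F : R ⥤q SingleObj M) (G : S ⥤q SingleObj M) :
    Quiver (PullbackQuiver R S F G) :=
  ⟨fun p q => {ef : ((p : R × S).1 ⟶ (q : R × S).1) × ((p : R × S).2 ⟶ (q : R × S).2) //
    F.map ef.1 = G.map ef.2}⟩

namespace PullbackQuiver

variable {M : Type v} {R S : Type u} [Quiver.{v+1} R] [Quiver.{v+1} S]
  (F : R ⥤q SingleObj M) (G : S ⥤q SingleObj M)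

def fst : PullbackQuiver R S F G ⥤q R := ⟨Prod.fst, fun e => e.1.1⟩

def snd : PullbackQuiver R S F G ⥤q S := ⟨Prod.snd, fun e => e.1.2⟩

variable {F G}

theorem mapPath_fst_eq_mapPath_snd {a b : PullbackQuiver R S F G} (p : Path a b) :
    F.mapPath ((fst F G).mapPath p) = G.mapPath ((snd F G).mapPath p) := by
  induction p with
  | nil => rfl
  | cons p e ih =>
    simp only [Prefunctor.mapPath_cons, ih]
    exact congrArg _ e.2

theorem eq_of_mapPath_fst_eq_of_mapPath_snd_eq {a : PullbackQuiver R S F G} :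
    ∀ {b : PullbackQuiver R S F G} {p p' : Path a b}, (fst F G).mapPath p = (fst F G).mapPath p' →
      (snd F G).mapPath p = (snd F G).mapPath p' → p = p'
  | _, .nil, .nil, _, _ => rfl
  | _, .nil, .cons _ _, h, _ => by simp [Prefunctor.mapPath_cons] at h
  | _, .cons _ _, .nil, h, _ => by simp [Prefunctor.mapPath_cons] at h
  | _, .cons p e, .cons p' e', h₁, h₂ => by
    simp only [Prefunctor.mapPath_cons] at h₁ h₂
    obtain rfl : _ = _ :=
      Prod.ext (Path.obj_eq_of_cons_eq_cons h₁) (Path.obj_eq_of_cons_eq_cons h₂)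
    have hp : p = p' := eq_of_mapPath_fst_eq_of_mapPath_snd_eq
      (eq_of_heq (Path.heq_of_cons_eq_cons h₁)) (eq_of_heq (Path.heq_of_cons_eq_cons h₂))
    have he : e = e' := Subtype.ext <| Prod.ext
      (eq_of_heq (Path.hom_heq_of_cons_eq_cons h₁)) (eq_of_heq (Path.hom_heq_of_cons_eq_cons h₂))
    rw [hp, he]

theorem exists_path_of_mapPath_eq {r : R} {s : S} :
    ∀ {r' : R} {s' : S} (p : Path r r') (q : Path s s'), F.mapPath p = G.mapPath q →
      ∃ x : Path (V := PullbackQuiver R S F G) (r, s) (r', s'),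
        (fst F G).mapPath x = p ∧ (snd F G).mapPath x = q
  | _, _, .nil, .nil, _ => ⟨.nil, rfl, rfl⟩
  | _, _, .nil, .cons _ _, h => by simp [Prefunctor.mapPath_cons] at h
  | _, _, .cons _ _, .nil, h => by simp [Prefunctor.mapPath_cons] at h
  | _, _, .cons p e, .cons q f, h => by
    simp only [Prefunctor.mapPath_cons] at h
    obtain ⟨x, rfl, rfl⟩ :=
      exists_path_of_mapPath_eq p q (eq_of_heq (Path.heq_of_cons_eq_cons h))
    exact ⟨x.cons ⟨(e, f), eq_of_heq (Path.hom_heq_of_cons_eq_cons h)⟩, rfl, rfl⟩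

variable (F G)

noncomputable def pathEquiv (r r' : R) (s s' : S) :
    Path (V := PullbackQuiver R S F G) (r, s) (r', s') ≃
      {pq : Path r r' × Path s s' // F.mapPath pq.1 = G.mapPath pq.2} :=
  Equiv.ofBijective
    (fun x => ⟨((fst F G).mapPath x, (snd F G).mapPath x), mapPath_fst_eq_mapPath_snd x⟩)
    ⟨fun _ _ h => eq_of_mapPath_fst_eq_of_mapPath_snd_eq
        (congrArg (·.1.1) h) (congrArg (·.1.2) h),
      fun ⟨(p, q), h⟩ => (exists_path_of_mapPath_eq p q h).imp
        fun _ ⟨h₁, h₂⟩ => Subtype.ext (Prod.ext h₁ h₂)⟩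

end PullbackQuiver

/-- Let `T = SingleObj M` be a quiver with exactly one vertex whose arrows
form the type `M`, let `F : R ⥤q T` and `G : S ⥤q T` be prefunctors, and let `P` be the
pullback quiver. Then paths in `P` from `(r,s)` to `(r',s')` are in bijection with pairs
of paths `(p, q)`, `p : Path r r'` in `R` and `q : Path s s'` in `S`, such that
`F.mapPath p = G.mapPath q`. -/
theorem statement3 {M : Type v} (R S : Type u) [Quiver.{v+1} R] [Quiver.{v+1} S]
    (F : R ⥤q SingleObj M) (G : S ⥤q SingleObj M) (r r' : R) (s s' : S) :
    Nonempty (Quiver.Path (V := PullbackQuiver R S F G) (r, s) (r', s') ≃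
      {pq : Path r r' × Path s s' // F.mapPath pq.1 = G.mapPath pq.2}) :=
  ⟨PullbackQuiver.pathEquiv F G r r' s s'⟩
end

section
/- Let ξ : Fin m → ℤ, η : Fin n → ℤ, θ : Fin k → ℤ take values in {1, −1}. Let C be the quiver with vertex type ℤ × ℤ in which an arrow from (r, r') to (s, s') is a pair (e, e') where e is an arrow r ⟶ s in A(ξ, η) with label (x, y) and e' is an arrow r' ⟶ s' in A(η, θ) with label (y', z), subject to y = y' (the middle boundary labels agree). Then the assignment sending a vertex (i, j) to i + j and an arrow (e, e') with labels (x, y) and (y, z) to the arrow of A(ξ, θ) from the sum of sources to the sum of targets with label (x, z) is a well-defined prefunctor α : C ⥤q A(ξ, θ); in particular, for every such pair of arrows, (s + s') − (r + r') = (∑ i, ξ i * x i) − (∑ j, θ j * z j). -/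
/-- The standard account `A(ξ, ζ)`: its vertices are the integers. -/
structure Acct {m n : ℕ} (ξ : Fin m → ℤ) (ζ : Fin n → ℤ) where
  val : ℤ

/-- An arrow from `r` to `s` in the standard account is a pair of tuples
`(x, y)` satisfying the continuity equation
`s - r = ∑ i, ξ i * x i - ∑ j, ζ j * y j`; its label is the pair `(x, y)`. -/
instance accQuiver {m n : ℕ} (ξ : Fin m → ℤ) (ζ : Fin n → ℤ) : Quiver (Acct ξ ζ) :=
  ⟨fun r s => {xy : (Fin m → ℕ) × (Fin n → ℕ) //
    s.val - r.val = (∑ i, ξ i * (xy.1 i : ℤ)) - (∑ j, ζ j * (xy.2 j : ℤ))}⟩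

/-- The head `C` of the composite span `A(ξ, η) • A(η, θ)`: vertices are pairs of
integers. -/
structure CompAcct {m n k : ℕ} (ξ : Fin m → ℤ) (η : Fin n → ℤ) (θ : Fin k → ℤ) where
  fst : ℤ
  snd : ℤ

/-- An arrow `(r, r') ⟶ (s, s')` in `C` is a pair consisting of an arrow `r ⟶ s` of
`A(ξ, η)` with label `(x, y)` and an arrow `r' ⟶ s'` of `A(η, θ)` with label `(y', z)`,
subject to the middle boundary labels agreeing: `y = y'`. -/
instance compAcctQuiver {m n k : ℕ} (ξ : Fin m → ℤ) (η : Fin n → ℤ) (θ : Fin k → ℤ) :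
    Quiver (CompAcct ξ η θ) :=
  ⟨fun p q => {ee' : ((⟨p.fst⟩ : Acct ξ η) ⟶ ⟨q.fst⟩) × ((⟨p.snd⟩ : Acct η θ) ⟶ ⟨q.snd⟩) //
    ee'.1.val.2 = ee'.2.val.1}⟩

/-- the assignment sending a vertex `(i, j)` of `C` to `i + j` and an arrow
`(e, e')` with labels `(x, y)` and `(y, z)` to the arrow of `A(ξ, θ)` with label `(x, z)`
is a well-defined prefunctor `α : C ⥤q A(ξ, θ)`; in particular for every such pair of
arrows `(s + s') - (r + r') = ∑ i, ξ i * x i - ∑ j, θ j * z j`. -/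
theorem statement8 {m n k : ℕ} (ξ : Fin m → ℤ) (η : Fin n → ℤ) (θ : Fin k → ℤ)
    (hξ : ∀ i, ξ i = 1 ∨ ξ i = -1) (hη : ∀ i, η i = 1 ∨ η i = -1)
    (hθ : ∀ i, θ i = 1 ∨ θ i = -1) :
    (∀ (p q : CompAcct ξ η θ) (e : p ⟶ q),
      (q.fst + q.snd) - (p.fst + p.snd) =
        (∑ i, ξ i * (e.val.1.val.1 i : ℤ)) - (∑ j, θ j * (e.val.2.val.2 j : ℤ))) ∧
    ∃ α : CompAcct ξ η θ ⥤q Acct ξ θ,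
      (∀ p : CompAcct ξ η θ, (α.obj p).val = p.fst + p.snd) ∧
      (∀ (p q : CompAcct ξ η θ) (e : p ⟶ q),
        (α.map e).val = (e.val.1.val.1, e.val.2.val.2)) := by
  have key : ∀ (p q : CompAcct ξ η θ) (e : p ⟶ q),
      (q.fst + q.snd) - (p.fst + p.snd) =
        (∑ i, ξ i * (e.val.1.val.1 i : ℤ)) - (∑ j, θ j * (e.val.2.val.2 j : ℤ)) := by
    intro p q e
    have h1 := e.val.1.property
    have h2 := e.val.2.property
    have h3 := e.property
    simp only [h3] at h1
    dsimp at h1 h2 ⊢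
    omega
  refine ⟨key, ⟨⟨fun p => ⟨p.fst + p.snd⟩, fun {p q} e =>
    ⟨(e.val.1.val.1, e.val.2.val.2), key p q e⟩⟩, fun p => rfl, fun p q e => rfl⟩⟩
end

section
/- Let ξ : Fin m → ℤ, η : Fin n → ℤ, θ : Fin k → ℤ take values in {1, −1}. Let R and S be quivers equipped with labellings ℓR (assigning to each arrow of R a pair of tuples in (Fin m → ℕ) × (Fin n → ℕ)) and ℓS (assigning to each arrow of S a pair in (Fin n → ℕ) × (Fin k → ℕ)). Let φR : R ⥤q A(ξ, η) and φS : S ⥤q A(η, θ) be prefunctors compatible with the labellings, i.e. for every arrow e of R the label of φR.map e equals ℓR(e), and similarly for φS. Define the composite head quiver C with vertex type R₀ × S₀, where an arrow from (u, v) to (u', v') is a pair (e : u ⟶ u', e' : v ⟶ v') with (ℓR e).2 = (ℓS e').1. Then the assignment sending a vertex (u, v) to φR.obj u + φS.obj v and an arrow (e, e') to the arrow of A(ξ, θ) with label ((ℓR e).1, (ℓS e').2) is a well-defined prefunctor C ⥤q A(ξ, θ). -/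
universe u v

/-- The head of the composite of two labelled quivers: vertices are pairs, and an arrow
`(u, v) ⟶ (u', v')` is a pair of arrows whose labels agree on the common boundary. -/
@[nolint unusedArguments]
def CompHead {m n k : ℕ} (R S : Type u) [Quiver.{v+1} R] [Quiver.{v+1} S]
    (_ℓR : ∀ {u v : R}, (u ⟶ v) → (Fin m → ℕ) × (Fin n → ℕ))
    (_ℓS : ∀ {u v : S}, (u ⟶ v) → (Fin n → ℕ) × (Fin k → ℕ)) : Type u := R × S

instance compHeadQuiver {m n k : ℕ} (R S : Type u) [Quiver.{v+1} R] [Quiver.{v+1} S]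
    (ℓR : ∀ {u v : R}, (u ⟶ v) → (Fin m → ℕ) × (Fin n → ℕ))
    (ℓS : ∀ {u v : S}, (u ⟶ v) → (Fin n → ℕ) × (Fin k → ℕ)) :
    Quiver (CompHead R S ℓR ℓS) :=
  ⟨fun p q => {ee' : ((p : R × S).1 ⟶ (q : R × S).1) × ((p : R × S).2 ⟶ (q : R × S).2) //
    (ℓR ee'.1).2 = (ℓS ee'.2).1}⟩

/-- given labelled quivers `R`, `S` and label-compatible measurements
`φR : R ⥤q A(ξ, η)`, `φS : S ⥤q A(η, θ)`, the assignment sending a vertex `(u, v)` of the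
composite head to `φR.obj u + φS.obj v`, and an arrow `(e, e')` to the arrow of `A(ξ, θ)`
with label `((ℓR e).1, (ℓS e').2)`, is a well-defined prefunctor. -/
theorem statement10 {m n k : ℕ} (ξ : Fin m → ℤ) (η : Fin n → ℤ) (θ : Fin k → ℤ)
    (hξ : ∀ i, ξ i = 1 ∨ ξ i = -1) (hη : ∀ i, η i = 1 ∨ η i = -1)
    (hθ : ∀ i, θ i = 1 ∨ θ i = -1)
    (R S : Type u) [Quiver.{v+1} R] [Quiver.{v+1} S]
    (ℓR : ∀ {u v : R}, (u ⟶ v) → (Fin m → ℕ) × (Fin n → ℕ))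
    (ℓS : ∀ {u v : S}, (u ⟶ v) → (Fin n → ℕ) × (Fin k → ℕ))
    (φR : R ⥤q Acct ξ η) (φS : S ⥤q Acct η θ)
    (hφR : ∀ {u v : R} (e : u ⟶ v), (φR.map e).val = ℓR e)
    (hφS : ∀ {u v : S} (e : u ⟶ v), (φS.map e).val = ℓS e) :
    ∃ Φ : CompHead R S ℓR ℓS ⥤q Acct ξ θ,
      (∀ p : CompHead R S ℓR ℓS,
        (Φ.obj p).val = (φR.obj (p : R × S).1).val + (φS.obj (p : R × S).2).val) ∧
      (∀ (p q : CompHead R S ℓR ℓS) (e : p ⟶ q),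
        (Φ.map e).val = ((ℓR e.val.1).1, (ℓS e.val.2).2)) := by
  refine ⟨⟨fun p => ⟨(φR.obj (p : R × S).1).val + (φS.obj (p : R × S).2).val⟩,
    fun {p q} e => ⟨((ℓR e.val.1).1, (ℓS e.val.2).2), ?_⟩⟩, fun p => rfl, fun p q e => rfl⟩
  have h1 := (φR.map e.val.1).property
  have h2 := (φS.map e.val.2).property
  rw [hφR e.val.1] at h1
  rw [hφS e.val.2] at h2
  have hb := e.property
  simp only at h1 h2 ⊢
  rw [hb] at h1
  omega
end
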